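/- Let ν > 1 and define B_ν(u) = (1 − c_ν u^ν K_ν(u)) / u² for u > 0, where K_ν is the modified Bessel function of the second kind and c_ν = 2^{1−ν}/Γ(ν). Then lim_{u → 0⁺} B_ν(u) = 1/(4(ν − 1)). -/

import Mathlib

open Filter

/-- The modified Bessel function of the second kind, via its integral
representation `K_ν(u) = ∫_0^∞ exp(-u cosh t) cosh(ν t) dt`. -/
noncomputable def besselK (ν u : ℝ) : ℝ :=
  ∫ t in Set.Ioi (0 : ℝ), Real.exp (-u * Real.cosh t) * Real.cosh (ν * t)

/-!
Symmetrising, `K_ν(u) = ½ ∫_ℝ e^{-u cosh t} e^{νt} dt`, and the substitution `s = (u/2) eᵗ` turns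
this into `u^ν K_ν(u) = 2^{ν-1} ∫_0^∞ e^{-s} e^{-u²/(4s)} s^{ν-1} ds`. Comparing with
`Γ(ν) = ∫_0^∞ e^{-s} s^{ν-1} ds` gives
`B_ν(u) = Γ(ν)⁻¹ ∫_0^∞ e^{-s} s^{ν-1} (1 - e^{-u²/(4s)}) / u² ds`.
Since `1 - e^{-x} ≤ x`, the integrand is dominated by `e^{-s} s^{ν-2} / 4`, which is integrable
precisely because `ν > 1`, and it converges to that bound as `u → 0`; dominated convergence yields
`Γ(ν-1) / (4 Γ(ν)) = 1 / (4(ν-1))`.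
-/

open MeasureTheory Set Real Topology

noncomputable def besselKKernel (ν u s : ℝ) : ℝ :=
  exp (-s) * exp (-(u ^ 2 / (4 * s))) * s ^ (ν - 1)

section ConstMulExp

variable {E : Type*} [NormedAddCommGroup E] [NormedSpace ℝ E] {a : ℝ}

lemma range_const_mul_exp (ha : 0 < a) : range (fun t => a * exp t) = Ioi 0 := by
  ext x
  refine ⟨?_, fun hx => ⟨log (x / a), ?_⟩⟩
  · rintro ⟨t, rfl⟩
    exact mul_pos ha (exp_pos t)
  · change a * exp (log (x / a)) = x
    rw [exp_log (div_pos hx ha)]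
    field_simp

lemma integrableOn_Ioi_iff_integrable_const_mul_exp (ha : 0 < a) (g : ℝ → E) :
    IntegrableOn g (Ioi 0) ↔ Integrable (fun t => (a * exp t) • g (a * exp t)) := by
  have := integrableOn_image_iff_integrableOn_abs_deriv_smul MeasurableSet.univ
    (fun t _ => ((hasDerivAt_exp t).const_mul a).hasDerivWithinAt)
    (exp_strictMono.const_mul ha).injective.injOn g
  rw [image_univ, range_const_mul_exp ha, integrableOn_univ] at this
  simpa only [abs_of_pos (mul_pos ha (exp_pos _))] using this

lemma integral_Ioi_eq_integral_const_mul_exp (ha : 0 < a) (g : ℝ → E) :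
    ∫ s in Ioi 0, g s = ∫ t, (a * exp t) • g (a * exp t) := by
  have := integral_image_eq_integral_abs_deriv_smul MeasurableSet.univ
    (fun t _ => ((hasDerivAt_exp t).const_mul a).hasDerivWithinAt)
    (exp_strictMono.const_mul ha).injective.injOn g
  rw [image_univ, range_const_mul_exp ha, Measure.restrict_univ] at this
  simpa only [abs_of_pos (mul_pos ha (exp_pos _))] using this

end ConstMulExp

section Representation

variable {ν u : ℝ}

lemma besselK_eq_half_integral
    (h : Integrable (fun t => exp (-u * cosh t) * exp (ν * t))) :
    besselK ν u = 2⁻¹ * ∫ t, exp (-u * cosh t) * exp (ν * t) := by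
  set f := fun t => exp (-u * cosh t) * exp (ν * t)
  have hcosh : ∀ t, exp (-u * cosh t) * cosh (ν * t) = 2⁻¹ * (f (-t) + f t) := fun t => by
    simp only [f, cosh_neg, mul_neg, cosh_eq (ν * t)]
    ring
  rw [besselK, ← intervalIntegral.integral_Iic_add_Ioi h.integrableOn h.integrableOn,
    ← integral_comp_neg_Ioi, neg_zero, ← integral_add h.comp_neg.integrableOn h.integrableOn,
    ← integral_const_mul]
  simp only [hcosh]

lemma measurable_besselKKernel : Measurable (besselKKernel ν u) := by
  unfold besselKKernel
  fun_prop

lemma besselKKernel_nonneg {s : ℝ} (hs : 0 ≤ s) : 0 ≤ besselKKernel ν u s := by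
  unfold besselKKernel
  positivity

lemma besselKKernel_le {s : ℝ} (hs : 0 ≤ s) : besselKKernel ν u s ≤ exp (-s) * s ^ (ν - 1) := by
  have : exp (-(u ^ 2 / (4 * s))) ≤ 1 := exp_le_one_iff.mpr (neg_nonpos.mpr (by positivity))
  calc besselKKernel ν u s ≤ exp (-s) * 1 * s ^ (ν - 1) := by unfold besselKKernel; gcongr
    _ = exp (-s) * s ^ (ν - 1) := by rw [mul_one]

lemma integrableOn_besselKKernel (hν : 0 < ν) : IntegrableOn (besselKKernel ν u) (Ioi 0) := by
  refine (GammaIntegral_convergent hν).mono' measurable_besselKKernel.aestronglyMeasurable ?_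
  filter_upwards [ae_restrict_mem measurableSet_Ioi] with s (hs : 0 < s)
  rw [norm_of_nonneg (besselKKernel_nonneg hs.le)]
  exact besselKKernel_le hs.le

lemma const_mul_exp_mul_besselKKernel (hu : 0 < u) (t : ℝ) :
    u / 2 * exp t * besselKKernel ν u (u / 2 * exp t) =
      (u / 2) ^ ν * (exp (-u * cosh t) * exp (ν * t)) := by
  have hs : 0 < u / 2 * exp t := by positivity
  have hexp : -(u / 2 * exp t) + -(u ^ 2 / (4 * (u / 2 * exp t))) = -u * cosh t := by
    rw [cosh_eq, exp_neg]
    field_simp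
    ring
  have hpow : u / 2 * exp t * (u / 2 * exp t) ^ (ν - 1) = (u / 2) ^ ν * exp (ν * t) := by
    rw [rpow_sub_one hs.ne', mul_div_cancel₀ _ hs.ne', mul_rpow (by positivity) (exp_pos t).le,
      ← exp_mul, mul_comm t]
  calc u / 2 * exp t * besselKKernel ν u (u / 2 * exp t)
      = exp (-(u / 2 * exp t) + -(u ^ 2 / (4 * (u / 2 * exp t)))) *
          (u / 2 * exp t * (u / 2 * exp t) ^ (ν - 1)) := by
        rw [besselKKernel, exp_add]
        ring
    _ = (u / 2) ^ ν * (exp (-u * cosh t) * exp (ν * t)) := by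
        rw [hexp, hpow]
        ring

lemma rpow_mul_besselK_eq_integral (hν : 0 < ν) (hu : 0 < u) :
    u ^ ν * besselK ν u = 2 ^ (ν - 1) * ∫ s in Ioi 0, besselKKernel ν u s := by
  have ha : 0 < u / 2 := half_pos hu
  have hsub : (fun t => (u / 2 * exp t) • besselKKernel ν u (u / 2 * exp t)) =
      fun t => (u / 2) ^ ν * (exp (-u * cosh t) * exp (ν * t)) :=
    funext (const_mul_exp_mul_besselKKernel hu)
  have hint : Integrable (fun t => exp (-u * cosh t) * exp (ν * t)) := by
    have := (integrableOn_Ioi_iff_integrable_const_mul_exp ha _).mp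
      (integrableOn_besselKKernel (u := u) hν)
    rw [hsub] at this
    exact (integrable_const_mul_iff (rpow_pos_of_pos ha ν).ne'.isUnit _).mp this
  rw [integral_Ioi_eq_integral_const_mul_exp ha, hsub, integral_const_mul,
    besselK_eq_half_integral hint, div_rpow hu.le zero_le_two, rpow_sub_one two_ne_zero]
  field_simp

lemma integral_mul_one_sub_exp_neg_eq (hν : 0 < ν) (u : ℝ) :
    ∫ s in Ioi 0, exp (-s) * s ^ (ν - 1) * (1 - exp (-(u ^ 2 / (4 * s)))) =
      Gamma ν - ∫ s in Ioi 0, besselKKernel ν u s := by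
  rw [Gamma_eq_integral hν, ← integral_sub (GammaIntegral_convergent hν)
    (integrableOn_besselKKernel hν)]
  congr with s
  rw [besselKKernel]
  ring

lemma one_sub_mul_rpow_mul_besselK (hν : 0 < ν) (hu : 0 < u) :
    1 - 2 ^ (1 - ν) / Gamma ν * u ^ ν * besselK ν u =
      (∫ s in Ioi 0, exp (-s) * s ^ (ν - 1) * (1 - exp (-(u ^ 2 / (4 * s))))) / Gamma ν := by
  have h2 : (2 : ℝ) ^ (1 - ν) * 2 ^ (ν - 1) = 1 := by
    rw [← rpow_add two_pos, sub_add_sub_cancel, sub_self, rpow_zero]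
  rw [integral_mul_one_sub_exp_neg_eq hν, mul_assoc, rpow_mul_besselK_eq_integral hν hu]
  field_simp [(Gamma_pos_of_pos hν).ne']
  linear_combination -(∫ s in Ioi 0, besselKKernel ν u s) * h2

end Representation

section Limit

lemma tendsto_one_sub_exp_neg_div : Tendsto (fun y => (1 - exp (-y)) / y) (𝓝[≠] 0) (𝓝 1) := by
  have hd := (hasDerivAt_neg (0 : ℝ)).exp.neg.tendsto_slope_zero
  rw [neg_zero, exp_zero, one_mul, neg_neg] at hd
  refine hd.congr fun y => ?_
  simp only [Pi.neg_apply, zero_add, neg_zero, exp_zero, smul_eq_mul]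
  ring

lemma tendsto_one_sub_exp_neg_sq_div {c : ℝ} (hc : 0 < c) :
    Tendsto (fun u => (1 - exp (-(u ^ 2 / c))) / u ^ 2) (𝓝[≠] 0) (𝓝 (1 / c)) := by
  have hsq : Tendsto (fun u : ℝ => u ^ 2 / c) (𝓝[≠] 0) (𝓝[≠] 0) := by
    refine tendsto_nhdsWithin_of_tendsto_nhds_of_eventually_within _ ?_ ?_
    · have : Continuous fun u : ℝ => u ^ 2 / c := by fun_prop
      simpa [hc.ne'] using this.tendsto 0 |>.mono_left nhdsWithin_le_nhds
    · filter_upwards [self_mem_nhdsWithin] with u hu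
      exact div_ne_zero (pow_ne_zero 2 hu) hc.ne'
  have := (tendsto_one_sub_exp_neg_div.comp hsq).mul_const (1 / c)
  rw [one_mul] at this
  refine this.congr' ?_
  filter_upwards [self_mem_nhdsWithin] with u hu
  have : u ≠ 0 := hu
  simp only [Function.comp_apply]
  field_simp

lemma abs_one_sub_exp_neg_sq_div_le {c : ℝ} (hc : 0 < c) (u : ℝ) :
    |(1 - exp (-(u ^ 2 / c))) / u ^ 2| ≤ 1 / c := by
  have hx : 0 ≤ u ^ 2 / c := by positivity
  have hlow : 0 ≤ 1 - exp (-(u ^ 2 / c)) := sub_nonneg.mpr (exp_le_one_iff.mpr (by linarith))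
  have hup : 1 - exp (-(u ^ 2 / c)) ≤ u ^ 2 / c := by linarith [add_one_le_exp (-(u ^ 2 / c))]
  rw [abs_of_nonneg (by positivity)]
  rcases eq_or_ne u 0 with rfl | hu
  · simp [hc.le]
  · calc (1 - exp (-(u ^ 2 / c))) / u ^ 2 ≤ u ^ 2 / c / u ^ 2 := by gcongr
      _ = 1 / c := by field_simp

lemma tendsto_integral_mul_one_sub_exp_neg_div_sq {ν : ℝ} (hν : 1 < ν) :
    Tendsto
      (fun u => ∫ s in Ioi 0, exp (-s) * s ^ (ν - 1) * ((1 - exp (-(u ^ 2 / (4 * s)))) / u ^ 2))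
      (𝓝[≠] 0) (𝓝 (Gamma (ν - 1) / 4)) := by
  have hν' : 0 < ν - 1 := sub_pos.mpr hν
  set f := fun s => exp (-s) * s ^ (ν - 1) * (1 / (4 * s))
  have hf : EqOn f (fun s => exp (-s) * s ^ (ν - 1 - 1) * 4⁻¹) (Ioi 0) := fun s hs => by
    simp only [f, rpow_sub_one (ne_of_gt hs) (ν - 1)]
    field_simp
  have hf_int : IntegrableOn f (Ioi 0) :=
    IntegrableOn.congr_fun ((GammaIntegral_convergent hν').mul_const _) hf.symm measurableSet_Ioi
  have hf_val : ∫ s in Ioi 0, f s = Gamma (ν - 1) / 4 := by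
    rw [setIntegral_congr_fun measurableSet_Ioi hf, integral_mul_const, ← Gamma_eq_integral hν']
    ring
  rw [← hf_val]
  refine tendsto_integral_filter_of_dominated_convergence f
    (Eventually.of_forall fun u => Measurable.aestronglyMeasurable (by fun_prop))
    (Eventually.of_forall fun u => ?_) hf_int ?_
  all_goals filter_upwards [ae_restrict_mem measurableSet_Ioi] with s (hs : 0 < s)
  · rw [norm_mul, norm_of_nonneg (by positivity), norm_eq_abs]
    exact mul_le_mul_of_nonneg_left (abs_one_sub_exp_neg_sq_div_le (by positivity) u)
      (by positivity)
  · exact (tendsto_one_sub_exp_neg_sq_div (by positivity)).const_mul _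

end Limit

/-- For `ν > 1`, with `c_ν = 2^{1-ν}/Γ(ν)`, the quotient
`B_ν(u) = (1 - c_ν u^ν K_ν(u))/u²` tends to `1/(4(ν-1))` as `u → 0⁺`. -/
theorem stmt15 (ν : ℝ) (hν : 1 < ν) :
    Tendsto
      (fun u : ℝ =>
        (1 - (2 : ℝ) ^ (1 - ν) / Real.Gamma ν * u ^ ν * besselK ν u) / u ^ 2)
      (nhdsWithin 0 (Set.Ioi 0)) (nhds (1 / (4 * (ν - 1)))) := by
  have hν' : 0 < ν - 1 := sub_pos.mpr hν
  have hΓ : Gamma ν = (ν - 1) * Gamma (ν - 1) := by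
    rw [← Gamma_add_one hν'.ne', sub_add_cancel]
  have hlim := ((tendsto_integral_mul_one_sub_exp_neg_div_sq hν).mono_left
    (nhdsGT_le_nhdsNE 0)).div_const (Gamma ν)
  have hval : Gamma (ν - 1) / 4 / Gamma ν = 1 / (4 * (ν - 1)) := by
    rw [hΓ]
    field_simp [(Gamma_pos_of_pos hν').ne']
  rw [hval] at hlim
  refine hlim.congr' ?_
  filter_upwards [self_mem_nhdsWithin] with u (hu : 0 < u)
  simp only [mul_div_assoc', integral_div]
  rw [one_sub_mul_rpow_mul_besselK (by linarith) hu, div_right_comm]
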